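/- The strong negation is definable in 2Int: writing N(A) := (A ∧ (A → (A ⤙ A))) ∨ ((A → A) ⤙ A), the four rules for strong negation are derivable for N(A), i.e. for all formulas A and all sets of assumptions Γ and counter-assumptions Δ: (i) if (Γ;Δ) ⊢⁻ A then (Γ;Δ) ⊢⁺ N(A); (ii) if (Γ;Δ) ⊢⁺ A then (Γ;Δ) ⊢⁻ N(A); (iii) if (Γ;Δ) ⊢⁺ N(A) then (Γ;Δ) ⊢⁻ A; and (iv) if (Γ;Δ) ⊢⁻ N(A) then (Γ;Δ) ⊢⁺ A. -/

import Mathlib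

/-- Formulas of Wansing's bi-intuitionistic logic 2Int. -/
inductive TwoInt : Type
  | atom  : ℕ → TwoInt
  | top   : TwoInt
  | bot   : TwoInt
  | and   : TwoInt → TwoInt → TwoInt
  | or    : TwoInt → TwoInt → TwoInt
  | imp   : TwoInt → TwoInt → TwoInt
  | coimp : TwoInt → TwoInt → TwoInt

open TwoInt

mutual
/-- Proofs in 2Int: `ProvesP Γ Δ A` means `(Γ;Δ) ⊢⁺ A`. -/
inductive ProvesP : Set TwoInt → Set TwoInt → TwoInt → Prop
  | assum {Γ Δ A} : A ∈ Γ → ProvesP Γ Δ A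
  | topI {Γ Δ} : ProvesP Γ Δ top
  | botE_p {Γ Δ A} : ProvesP Γ Δ bot → ProvesP Γ Δ A
  | topE_p {Γ Δ A} : ProvesD Γ Δ top → ProvesP Γ Δ A
  | andI_p {Γ Δ A B} : ProvesP Γ Δ A → ProvesP Γ Δ B → ProvesP Γ Δ (and A B)
  | andE1_p {Γ Δ A B} : ProvesP Γ Δ (and A B) → ProvesP Γ Δ A
  | andE2_p {Γ Δ A B} : ProvesP Γ Δ (and A B) → ProvesP Γ Δ B
  | orI1_p {Γ Δ A B} : ProvesP Γ Δ A → ProvesP Γ Δ (or A B)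
  | orI2_p {Γ Δ A B} : ProvesP Γ Δ B → ProvesP Γ Δ (or A B)
  | orE_p {Γ Δ A B C} : ProvesP Γ Δ (or A B) → ProvesP (Γ ∪ {A}) Δ C →
      ProvesP (Γ ∪ {B}) Δ C → ProvesP Γ Δ C
  | andE_p {Γ Δ A B C} : ProvesD Γ Δ (and A B) → ProvesP Γ (Δ ∪ {A}) C →
      ProvesP Γ (Δ ∪ {B}) C → ProvesP Γ Δ C
  | impI_p {Γ Δ A B} : ProvesP (Γ ∪ {A}) Δ B → ProvesP Γ Δ (imp A B)
  | impE_p {Γ Δ A B} : ProvesP Γ Δ (imp A B) → ProvesP Γ Δ A → ProvesP Γ Δ B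
  | impE1_m {Γ Δ A B} : ProvesD Γ Δ (imp A B) → ProvesP Γ Δ A
  | coimpI_p {Γ Δ A B} : ProvesP Γ Δ A → ProvesD Γ Δ B → ProvesP Γ Δ (coimp A B)
  | coimpE1_p {Γ Δ A B} : ProvesP Γ Δ (coimp A B) → ProvesP Γ Δ A

/-- Dual proofs in 2Int: `ProvesD Γ Δ A` means `(Γ;Δ) ⊢⁻ A`. -/
inductive ProvesD : Set TwoInt → Set TwoInt → TwoInt → Prop
  | cassum {Γ Δ A} : A ∈ Δ → ProvesD Γ Δ A
  | botI {Γ Δ} : ProvesD Γ Δ bot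
  | botE_m {Γ Δ A} : ProvesP Γ Δ bot → ProvesD Γ Δ A
  | topE_m {Γ Δ A} : ProvesD Γ Δ top → ProvesD Γ Δ A
  | andI1_m {Γ Δ A B} : ProvesD Γ Δ A → ProvesD Γ Δ (and A B)
  | andI2_m {Γ Δ A B} : ProvesD Γ Δ B → ProvesD Γ Δ (and A B)
  | andE_m {Γ Δ A B C} : ProvesD Γ Δ (and A B) → ProvesD Γ (Δ ∪ {A}) C →
      ProvesD Γ (Δ ∪ {B}) C → ProvesD Γ Δ C
  | orE_m {Γ Δ A B C} : ProvesP Γ Δ (or A B) → ProvesD (Γ ∪ {A}) Δ C →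
      ProvesD (Γ ∪ {B}) Δ C → ProvesD Γ Δ C
  | orI_m {Γ Δ A B} : ProvesD Γ Δ A → ProvesD Γ Δ B → ProvesD Γ Δ (or A B)
  | orE1_m {Γ Δ A B} : ProvesD Γ Δ (or A B) → ProvesD Γ Δ A
  | orE2_m {Γ Δ A B} : ProvesD Γ Δ (or A B) → ProvesD Γ Δ B
  | impI_m {Γ Δ A B} : ProvesP Γ Δ A → ProvesD Γ Δ B → ProvesD Γ Δ (imp A B)
  | impE2_m {Γ Δ A B} : ProvesD Γ Δ (imp A B) → ProvesD Γ Δ B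
  | coimpE2_p {Γ Δ A B} : ProvesP Γ Δ (coimp A B) → ProvesD Γ Δ B
  | coimpI_m {Γ Δ A B} : ProvesD Γ (Δ ∪ {B}) A → ProvesD Γ Δ (coimp A B)
  | coimpE_m {Γ Δ A B} : ProvesD Γ Δ (coimp A B) → ProvesD Γ Δ B → ProvesD Γ Δ A
end

/-- The defining formula `N(A) := (A ∧ (A → (A ⤙ A))) ∨ ((A → A) ⤙ A)` for strong negation. -/
def strongNeg (A : TwoInt) : TwoInt :=
  or (and A (imp A (coimp A A))) (coimp (imp A A) A)

/-! Both disjuncts of `N(A)` end in a co-implication `_ ⤙ A` (inside `A → (A ⤙ A)` for the first),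
so a proof of either yields a dual proof of `A`; as `A → A` is provable, a dual proof of `A` proves
the second disjunct. A dual proof of `N(A)` refutes both disjuncts. Refuting
`A ∧ (A → (A ⤙ A))` means refuting `A` or refuting `A → (A ⤙ A)`, whose antecedent `A` is then
proved; in the first case the refutation of `(A → A) ⤙ A` together with the counter-assumption
`A` refutes `A → A`, which again proves `A`. Conversely a proof of `A` refutes both disjuncts,
after weakening it by the counter-assumption `A` for the second one. -/

mutual

theorem ProvesP.mono {Γ Γ' Δ Δ' : Set TwoInt} {A : TwoInt} :
    ProvesP Γ Δ A → Γ ⊆ Γ' → Δ ⊆ Δ' → ProvesP Γ' Δ' A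
  | .assum h, hΓ, _ => .assum (hΓ h)
  | .topI, _, _ => .topI
  | .botE_p h, hΓ, hΔ => .botE_p (h.mono hΓ hΔ)
  | .topE_p h, hΓ, hΔ => .topE_p (h.mono hΓ hΔ)
  | .andI_p h₁ h₂, hΓ, hΔ => .andI_p (h₁.mono hΓ hΔ) (h₂.mono hΓ hΔ)
  | .andE1_p h, hΓ, hΔ => .andE1_p (h.mono hΓ hΔ)
  | .andE2_p h, hΓ, hΔ => .andE2_p (h.mono hΓ hΔ)
  | .orI1_p h, hΓ, hΔ => .orI1_p (h.mono hΓ hΔ)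
  | .orI2_p h, hΓ, hΔ => .orI2_p (h.mono hΓ hΔ)
  | .orE_p h h₁ h₂, hΓ, hΔ => .orE_p (h.mono hΓ hΔ)
      (h₁.mono (Set.union_subset_union_left _ hΓ) hΔ)
      (h₂.mono (Set.union_subset_union_left _ hΓ) hΔ)
  | .andE_p h h₁ h₂, hΓ, hΔ => .andE_p (h.mono hΓ hΔ)
      (h₁.mono hΓ (Set.union_subset_union_left _ hΔ))
      (h₂.mono hΓ (Set.union_subset_union_left _ hΔ))
  | .impI_p h, hΓ, hΔ => .impI_p (h.mono (Set.union_subset_union_left _ hΓ) hΔ)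
  | .impE_p h₁ h₂, hΓ, hΔ => .impE_p (h₁.mono hΓ hΔ) (h₂.mono hΓ hΔ)
  | .impE1_m h, hΓ, hΔ => .impE1_m (h.mono hΓ hΔ)
  | .coimpI_p h₁ h₂, hΓ, hΔ => .coimpI_p (h₁.mono hΓ hΔ) (h₂.mono hΓ hΔ)
  | .coimpE1_p h, hΓ, hΔ => .coimpE1_p (h.mono hΓ hΔ)

theorem ProvesD.mono {Γ Γ' Δ Δ' : Set TwoInt} {A : TwoInt} :
    ProvesD Γ Δ A → Γ ⊆ Γ' → Δ ⊆ Δ' → ProvesD Γ' Δ' A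
  | .cassum h, _, hΔ => .cassum (hΔ h)
  | .botI, _, _ => .botI
  | .botE_m h, hΓ, hΔ => .botE_m (h.mono hΓ hΔ)
  | .topE_m h, hΓ, hΔ => .topE_m (h.mono hΓ hΔ)
  | .andI1_m h, hΓ, hΔ => .andI1_m (h.mono hΓ hΔ)
  | .andI2_m h, hΓ, hΔ => .andI2_m (h.mono hΓ hΔ)
  | .andE_m h h₁ h₂, hΓ, hΔ => .andE_m (h.mono hΓ hΔ)
      (h₁.mono hΓ (Set.union_subset_union_left _ hΔ))
      (h₂.mono hΓ (Set.union_subset_union_left _ hΔ))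
  | .orE_m h h₁ h₂, hΓ, hΔ => .orE_m (h.mono hΓ hΔ)
      (h₁.mono (Set.union_subset_union_left _ hΓ) hΔ)
      (h₂.mono (Set.union_subset_union_left _ hΓ) hΔ)
  | .orI_m h₁ h₂, hΓ, hΔ => .orI_m (h₁.mono hΓ hΔ) (h₂.mono hΓ hΔ)
  | .orE1_m h, hΓ, hΔ => .orE1_m (h.mono hΓ hΔ)
  | .orE2_m h, hΓ, hΔ => .orE2_m (h.mono hΓ hΔ)
  | .impI_m h₁ h₂, hΓ, hΔ => .impI_m (h₁.mono hΓ hΔ) (h₂.mono hΓ hΔ)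
  | .impE2_m h, hΓ, hΔ => .impE2_m (h.mono hΓ hΔ)
  | .coimpE2_p h, hΓ, hΔ => .coimpE2_p (h.mono hΓ hΔ)
  | .coimpI_m h, hΓ, hΔ => .coimpI_m (h.mono hΓ (Set.union_subset_union_left _ hΔ))
  | .coimpE_m h₁ h₂, hΓ, hΔ => .coimpE_m (h₁.mono hΓ hΔ) (h₂.mono hΓ hΔ)

end

section

variable {Γ Δ : Set TwoInt} {A : TwoInt}

theorem ProvesP.assum_self : ProvesP (Γ ∪ {A}) Δ A :=
  .assum (Set.mem_union_right _ rfl)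

theorem ProvesD.cassum_self : ProvesD Γ (Δ ∪ {A}) A :=
  .cassum (Set.mem_union_right _ rfl)

theorem ProvesP.imp_self : ProvesP Γ Δ (imp A A) :=
  .impI_p .assum_self

theorem provesP_strongNeg_of_provesD (h : ProvesD Γ Δ A) : ProvesP Γ Δ (strongNeg A) :=
  .orI2_p (.coimpI_p .imp_self h)

theorem provesD_strongNeg_of_provesP (h : ProvesP Γ Δ A) : ProvesD Γ Δ (strongNeg A) :=
  .orI_m (.andI2_m (.impI_m h (.coimpI_m .cassum_self)))
    (.coimpI_m (.impI_m (h.mono subset_rfl Set.subset_union_left) .cassum_self))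

theorem provesD_of_provesP_strongNeg (h : ProvesP Γ Δ (strongNeg A)) : ProvesD Γ Δ A :=
  .orE_m h
    (.coimpE2_p (.impE_p (.andE2_p .assum_self) (.andE1_p .assum_self)))
    (.coimpE2_p .assum_self)

theorem provesP_of_provesD_strongNeg (h : ProvesD Γ Δ (strongNeg A)) : ProvesP Γ Δ A :=
  .andE_p (.orE1_m h)
    (.impE1_m (.coimpE_m ((ProvesD.orE2_m h).mono subset_rfl Set.subset_union_left) .cassum_self))
    (.impE1_m .cassum_self)

end

theorem strongNeg_definable_in_2Int :
    ∀ (A : TwoInt) (Γ Δ : Set TwoInt),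
      (ProvesD Γ Δ A → ProvesP Γ Δ (strongNeg A)) ∧
      (ProvesP Γ Δ A → ProvesD Γ Δ (strongNeg A)) ∧
      (ProvesP Γ Δ (strongNeg A) → ProvesD Γ Δ A) ∧
      (ProvesD Γ Δ (strongNeg A) → ProvesP Γ Δ A) :=
  fun _ _ _ => ⟨provesP_strongNeg_of_provesD, provesD_strongNeg_of_provesP,
    provesD_of_provesP_strongNeg, provesP_of_provesD_strongNeg⟩
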